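/- arXiv:2601.03049 — 8 statements merged into one kernel-verified Lean document; each statement's English description precedes it below -/
import Mathlib

section
/- Fix integers p ≥ q ≥ 1 and set p' = ⌊p/2⌋, q' = ⌊q/2⌋, N = ⌊(p+q)/2⌋ (this encodes the pair 𝔥 = 𝔰𝔬_p(ℂ) ⊕ 𝔰𝔬_q(ℂ) ⊂ 𝔤 = 𝔰𝔬_{p+q}(ℂ)). For a ∈ ℝ^{p'} and b ∈ ℝ^{q'} let c(a,b) ∈ ℝ^N be the concatenation a ⌢ b followed by N − p' − q' zeros (one zero if p and q are both odd, none otherwise). Then: (I) [for all a, b: 2(ρ_{SO_p}(a) + ρ_{SO_q}(b)) ≤ ρ_{SO_{p+q}}(c(a,b))] if and only if p ≤ q + 2; (II) [for all (a,b) ≠ (0,0): 2(ρ_{SO_p}(a) + ρ_{SO_q}(b)) < ρ_{SO_{p+q}}(c(a,b))] if and only if p ≤ q + 1. -/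
open Finset

/-- `ρ_A(c) = Σ_{i<j} |c_i - c_j|`, written in the permutation-invariant
symmetric form `(1/2) Σ_{i,j} |c_i - c_j|`. -/
noncomputable def rhoA {ι : Type*} [Fintype ι] (c : ι → ℝ) : ℝ :=
  (∑ i, ∑ j, |c i - c j|) / 2

/-- `ρ_B(c) = Σ_{i<j} (|c_i - c_j| + |c_i + c_j|) + Σ_i |c_i|`, written in the
permutation-invariant symmetric form `(1/2) Σ_{i,j} (|c_i - c_j| + |c_i + c_j|)`. -/
noncomputable def rhoB {ι : Type*} [Fintype ι] (c : ι → ℝ) : ℝ :=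
  (∑ i, ∑ j, (|c i - c j| + |c i + c j|)) / 2

/-- `ρ_D(c) = Σ_{i<j} (|c_i - c_j| + |c_i + c_j|) = ρ_B(c) - Σ_i |c_i|`. -/
noncomputable def rhoD {ι : Type*} [Fintype ι] (c : ι → ℝ) : ℝ :=
  rhoB c - ∑ i, |c i|

/-- `ρ_C(c) = Σ_{i<j} (|c_i - c_j| + |c_i + c_j|) + 2 Σ_i |c_i| = ρ_B(c) + Σ_i |c_i|`. -/
noncomputable def rhoC {ι : Type*} [Fintype ι] (c : ι → ℝ) : ℝ :=
  rhoB c + ∑ i, |c i|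

/-- `ρ_{SO_n}` is `ρ_D` for even `n` and `ρ_B` for odd `n`. -/
noncomputable def rhoSO (n : ℕ) {ι : Type*} [Fintype ι] (c : ι → ℝ) : ℝ :=
  if Even n then rhoD c else rhoB c

/-! ### Auxiliary machinery -/

noncomputable def MM {ι : Type*} [Fintype ι] (a : ι → ℝ) : ℝ := ∑ i, ∑ j, max |a i| |a j|
noncomputable def SS {ι : Type*} [Fintype ι] (a : ι → ℝ) : ℝ := ∑ i, |a i|
noncomputable def XX {ι κ : Type*} [Fintype ι] [Fintype κ] (a : ι → ℝ) (b : κ → ℝ) : ℝ :=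
  ∑ i, ∑ j, max |a i| |b j|

lemma two_max_abs (x y : ℝ) : |x - y| + |x + y| = 2 * max |x| |y| := by
  rcases abs_cases (x - y) with ⟨h1, h2⟩ | ⟨h1, h2⟩ <;>
  rcases abs_cases (x + y) with ⟨h3, h4⟩ | ⟨h3, h4⟩ <;>
  rcases abs_cases x with ⟨h5, h6⟩ | ⟨h5, h6⟩ <;>
  rcases abs_cases y with ⟨h7, h8⟩ | ⟨h7, h8⟩ <;>
  rw [max_def] <;> split_ifs <;> linarith

lemma rhoB_eq_MM {ι : Type*} [Fintype ι] (c : ι → ℝ) : rhoB c = MM c := by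
  unfold rhoB MM
  have : ∀ i j : ι, |c i - c j| + |c i + c j| = 2 * max |c i| |c j| := fun i j => two_max_abs _ _
  simp only [this, ← Finset.mul_sum]
  ring

lemma rhoSO_eq (n : ℕ) {ι : Type*} [Fintype ι] (c : ι → ℝ) :
    rhoSO n c = MM c - (if Even n then SS c else 0) := by
  unfold rhoSO rhoD
  split_ifs with h
  · rw [rhoB_eq_MM]; rfl
  · rw [rhoB_eq_MM]; ring

lemma SS_nonneg {ι : Type*} [Fintype ι] (a : ι → ℝ) : 0 ≤ SS a :=
  Finset.sum_nonneg fun i _ => abs_nonneg _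

lemma SS_eq_zero {ι : Type*} [Fintype ι] (a : ι → ℝ) (h : SS a = 0) : a = 0 := by
  funext i
  have := (Finset.sum_eq_zero_iff_of_nonneg (fun i _ => abs_nonneg (a i))).mp h i (mem_univ i)
  simpa [abs_eq_zero] using this

lemma SS_pos {ι : Type*} [Fintype ι] (a : ι → ℝ) (h : a ≠ 0) : 0 < SS a := by
  rcases lt_or_eq_of_le (SS_nonneg a) with h' | h'
  · exact h'
  · exact absurd (SS_eq_zero a h'.symm) h

lemma MM_zero {ι : Type*} [Fintype ι] : MM (0 : ι → ℝ) = 0 := by simp [MM]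
lemma SS_zero {ι : Type*} [Fintype ι] : SS (0 : ι → ℝ) = 0 := by simp [SS]

lemma XX_zero_right {ι κ : Type*} [Fintype ι] [Fintype κ] (a : ι → ℝ) :
    XX a (0 : κ → ℝ) = (Fintype.card κ) * SS a := by
  unfold XX SS
  have : ∀ i : ι, max |a i| (0:ℝ) = |a i| := fun i => max_eq_left (abs_nonneg _)
  simp only [Pi.zero_apply, abs_zero, this, Finset.sum_const,
    Finset.card_univ, nsmul_eq_mul, Finset.mul_sum]

lemma XX_zero_left {ι κ : Type*} [Fintype ι] [Fintype κ] (b : κ → ℝ) :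
    XX (0 : ι → ℝ) b = (Fintype.card ι) * SS b := by
  unfold XX SS
  have : ∀ j : κ, max (0:ℝ) |b j| = |b j| := fun j => max_eq_right (abs_nonneg _)
  simp only [Pi.zero_apply, abs_zero, this, Finset.sum_const,
    Finset.card_univ, nsmul_eq_mul, ← Finset.mul_sum]

lemma XX_swap {ι κ : Type*} [Fintype ι] [Fintype κ] (a : ι → ℝ) (b : κ → ℝ) :
    XX b a = XX a b := by
  unfold XX
  rw [Finset.sum_comm]
  exact Finset.sum_congr rfl fun i _ => Finset.sum_congr rfl fun j _ => max_comm _ _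

lemma core1 {n : ℕ} (α β : Fin n → ℝ) (hα : Monotone α) (hβ : Monotone β) :
    (∑ i, ∑ j, max (α i) (α j)) + (∑ i, ∑ j, max (β i) (β j)) ≤
      2 * ∑ i, ∑ j, max (α i) (β j) := by
  have key : ∀ i j : Fin n, max (α i) (α j) + max (β i) (β j)
      ≤ max (α i) (β j) + max (α j) (β i) := by
    intro i j
    rcases le_total i j with h | h
    · rw [max_eq_right (hα h), max_eq_right (hβ h)]
      have h1 : β j ≤ max (α i) (β j) := le_max_right _ _
      have h2 : α j ≤ max (α j) (β i) := le_max_left _ _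
      linarith
    · rw [max_eq_left (hα h), max_eq_left (hβ h)]
      have h1 : α i ≤ max (α i) (β j) := le_max_left _ _
      have h2 : β i ≤ max (α j) (β i) := le_max_right _ _
      linarith
  have e1 : (∑ i, ∑ j, max (α i) (α j)) + (∑ i, ∑ j, max (β i) (β j))
      = ∑ i, ∑ j, (max (α i) (α j) + max (β i) (β j)) := by
    rw [← Finset.sum_add_distrib]
    exact Finset.sum_congr rfl fun i _ => by rw [← Finset.sum_add_distrib]
  have e2 : (2:ℝ) * ∑ i, ∑ j, max (α i) (β j)
      = ∑ i, ∑ j, (max (α i) (β j) + max (α j) (β i)) := by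
    have : ∑ i, ∑ j, max (α j) (β i) = ∑ i, ∑ j, max (α i) (β j) := Finset.sum_comm
    rw [two_mul]
    nth_rewrite 2 [← this]
    rw [← Finset.sum_add_distrib]
    exact Finset.sum_congr rfl fun i _ => by rw [← Finset.sum_add_distrib]
  rw [e1, e2]
  exact Finset.sum_le_sum fun i _ => Finset.sum_le_sum fun j _ => key i j

lemma core2 {n : ℕ} (α : Fin (n+1) → ℝ) (β : Fin n → ℝ) (hα : Monotone α)
    (hβ : Monotone β) :
    (∑ i, ∑ j, max (α i) (α j)) + (∑ i, ∑ j, max (β i) (β j)) ≤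
      (2 * ∑ i, ∑ j, max (α i) (β j)) + α (Fin.last n) := by
  set t := α (Fin.last n) with ht
  set α' : Fin n → ℝ := fun i => α i.castSucc with hα'
  have hα'mono : Monotone α' := fun i j h => hα (Fin.castSucc_le_castSucc_iff.mpr h)
  have hle : ∀ i : Fin n, α' i ≤ t := fun i => hα (Fin.le_last _)
  have e1 : (∑ i, ∑ j, max (α i) (α j)) =
      (∑ i, ∑ j, max (α' i) (α' j)) + (2 * n * t + t) := by
    rw [Fin.sum_univ_castSucc (f := fun i => ∑ j, max (α i) (α j))]
    have inner : ∀ i : Fin n, (∑ j, max (α i.castSucc) (α j))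
        = (∑ j : Fin n, max (α' i) (α' j)) + t := by
      intro i
      rw [Fin.sum_univ_castSucc (f := fun j => max (α i.castSucc) (α j))]
      rw [max_eq_right (hle i)]
    have last : (∑ j, max (α (Fin.last n)) (α j)) = n * t + t := by
      rw [Fin.sum_univ_castSucc (f := fun j => max (α (Fin.last n)) (α j))]
      have : ∀ j : Fin n, max (α (Fin.last n)) (α j.castSucc) = t :=
        fun j => max_eq_left (hle j)
      simp only [this, max_self, Finset.sum_const, Finset.card_univ, Fintype.card_fin,
        nsmul_eq_mul]
      rfl
    rw [last]
    rw [Finset.sum_congr rfl fun i _ => inner i, Finset.sum_add_distrib]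
    simp only [Finset.sum_const, Finset.card_univ, Fintype.card_fin, nsmul_eq_mul]
    ring
  have e2 : (∑ i, ∑ j, max (α i) (β j)) =
      (∑ i : Fin n, ∑ j, max (α' i) (β j)) + ∑ j, max t (β j) := by
    rw [Fin.sum_univ_castSucc (f := fun i => ∑ j, max (α i) (β j))]
  have e3 : (n : ℝ) * t ≤ ∑ j, max t (β j) := by
    calc (n:ℝ) * t = ∑ _j : Fin n, t := by
          simp [Finset.sum_const, Finset.card_univ, Fintype.card_fin]
      _ ≤ ∑ j, max t (β j) := Finset.sum_le_sum fun j _ => le_max_left _ _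
  have hc := core1 α' β hα'mono hβ
  rw [e1, e2]
  linarith

lemma keyB {ι : Type*} [Fintype ι] (c : ι → ℝ) :
    MM c ≤ 2 * (Fintype.card ι) * SS c - SS c := by
  classical
  have pointwise : ∀ i j : ι, max |c i| |c j| ≤ |c i| + |c j| - if i = j then |c i| else 0 := by
    intro i j
    by_cases h : i = j
    · subst h; simp
    · simp only [h, if_false, sub_zero]
      exact max_le (le_add_of_nonneg_right (abs_nonneg _)) (le_add_of_nonneg_left (abs_nonneg _))
  have : MM c ≤ ∑ i, ∑ j, (|c i| + |c j| - if i = j then |c i| else 0) :=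
    Finset.sum_le_sum fun i _ => Finset.sum_le_sum fun j _ => pointwise i j
  refine this.trans_eq ?_
  have e : ∀ i : ι, ∑ j, (|c i| + |c j| - if i = j then |c i| else 0)
      = (Fintype.card ι) * |c i| + SS c - |c i| := by
    intro i
    rw [Finset.sum_sub_distrib, Finset.sum_add_distrib]
    simp [SS, Finset.sum_ite_eq, Finset.card_univ, mul_comm]
  rw [Finset.sum_congr rfl fun i _ => e i]
  rw [Finset.sum_sub_distrib, Finset.sum_add_distrib, ← Finset.mul_sum]
  have h1 : ∑ i, |c i| = SS c := rfl
  rw [h1]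
  simp only [Finset.sum_const, Finset.card_univ, nsmul_eq_mul]
  ring

lemma MM_perm {m : ℕ} (a : Fin m → ℝ) (σ : Equiv.Perm (Fin m)) :
    ∑ i, ∑ j, max |a (σ i)| |a (σ j)| = MM a := by
  have t1 : ∀ x : ℝ, ∑ j, max x |a (σ j)| = ∑ j, max x |a j| :=
    fun x => Equiv.sum_comp σ (fun j => max x |a j|)
  calc ∑ i, ∑ j, max |a (σ i)| |a (σ j)| = ∑ i, ∑ j, max |a (σ i)| |a j| :=
        Finset.sum_congr rfl fun i _ => t1 _
    _ = MM a := Equiv.sum_comp σ (fun i => ∑ j, max |a i| |a j|)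

lemma XX_perm {m n : ℕ} (a : Fin m → ℝ) (b : Fin n → ℝ) (σ : Equiv.Perm (Fin m))
    (τ : Equiv.Perm (Fin n)) :
    ∑ i, ∑ j, max |a (σ i)| |b (τ j)| = XX a b := by
  have t1 : ∀ x : ℝ, ∑ j, max x |b (τ j)| = ∑ j, max x |b j| :=
    fun x => Equiv.sum_comp τ (fun j => max x |b j|)
  calc ∑ i, ∑ j, max |a (σ i)| |b (τ j)| = ∑ i, ∑ j, max |a (σ i)| |b j| :=
        Finset.sum_congr rfl fun i _ => t1 _
    _ = XX a b := Equiv.sum_comp σ (fun i => ∑ j, max |a i| |b j|)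

lemma SS_perm {m : ℕ} (a : Fin m → ℝ) (σ : Equiv.Perm (Fin m)) :
    ∑ i, |a (σ i)| = SS a := Equiv.sum_comp σ (fun i => |a i|)

lemma key1 {n : ℕ} (a b : Fin n → ℝ) : MM a + MM b ≤ 2 * XX a b := by
  set σ := Tuple.sort (fun i => |a i|) with hσ
  set τ := Tuple.sort (fun i => |b i|) with hτ
  have hmα : Monotone ((fun i => |a i|) ∘ σ) := Tuple.monotone_sort _
  have hmβ : Monotone ((fun i => |b i|) ∘ τ) := Tuple.monotone_sort _
  have h := core1 ((fun i => |a i|) ∘ σ) ((fun i => |b i|) ∘ τ) hmα hmβ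
  simp only [Function.comp] at h
  rw [MM_perm a σ, MM_perm b τ, XX_perm a b σ τ] at h
  exact h

lemma key2 {n : ℕ} (a : Fin (n+1) → ℝ) (b : Fin n → ℝ) :
    MM a + MM b ≤ 2 * XX a b + SS a := by
  set σ := Tuple.sort (fun i => |a i|) with hσ
  set τ := Tuple.sort (fun i => |b i|) with hτ
  have hmα : Monotone ((fun i => |a i|) ∘ σ) := Tuple.monotone_sort _
  have hmβ : Monotone ((fun i => |b i|) ∘ τ) := Tuple.monotone_sort _
  have h := core2 ((fun i => |a i|) ∘ σ) ((fun i => |b i|) ∘ τ) hmα hmβ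
  simp only [Function.comp] at h
  have e4 : |a (σ (Fin.last n))| ≤ ∑ i, |a (σ i)| :=
    Finset.single_le_sum (f := fun i => |a (σ i)|) (fun i _ => abs_nonneg _) (Finset.mem_univ _)
  rw [SS_perm a σ] at e4
  rw [MM_perm a σ, MM_perm b τ, XX_perm a b σ τ] at h
  linarith

lemma lemA {m n : ℕ} (h : m = n ∨ m = n + 1) (a : Fin m → ℝ) (b : Fin n → ℝ) :
    MM a + MM b ≤ 2 * XX a b + SS a + SS b := by
  rcases h with h | h
  · subst h
    have := key1 a b
    have h1 := SS_nonneg a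
    have h2 := SS_nonneg b
    linarith
  · subst h
    have := key2 a b
    have h2 := SS_nonneg b
    linarith

lemma lemB {m n : ℕ} (h : m = n) (a : Fin m → ℝ) (b : Fin n → ℝ) :
    MM a + MM b ≤ 2 * XX a b + 2 * SS b := by
  subst h
  have := key1 a b
  have h2 := SS_nonneg b
  linarith

lemma lemC {m n : ℕ} (h : m = n + 1) (a : Fin m → ℝ) (b : Fin n → ℝ) :
    MM a + MM b ≤ 2 * XX a b + 2 * SS a := by
  subst h
  have := key2 a b
  have h1 := SS_nonneg a
  linarith

lemma ne_zero_of_not_both {m n : ℕ} {a : Fin m → ℝ} {b : Fin n → ℝ}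
    (hab : ¬(a = 0 ∧ b = 0)) : a ≠ 0 ∨ b ≠ 0 := by tauto

lemma lemA' {m n : ℕ} (h : m = n) (a : Fin m → ℝ) (b : Fin n → ℝ)
    (hab : ¬(a = 0 ∧ b = 0)) :
    MM a + MM b < 2 * XX a b + SS a + SS b := by
  subst h
  have := key1 a b
  have h1 := SS_nonneg a
  have h2 := SS_nonneg b
  rcases ne_zero_of_not_both hab with h' | h'
  · have := SS_pos a h'; linarith
  · have := SS_pos b h'; linarith

lemma lemB' {m n : ℕ} (h : m = n) (a : Fin m → ℝ) (b : Fin n → ℝ)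
    (hab : ¬(a = 0 ∧ b = 0)) :
    MM a + MM b < 2 * XX a b + 2 * SS b := by
  subst h
  by_cases hb : b = 0
  · subst hb
    have ha : a ≠ 0 := by tauto
    have hSa := SS_pos a ha
    have hK := keyB a
    rw [Fintype.card_fin] at hK
    rw [MM_zero, SS_zero, XX_zero_right a, Fintype.card_fin]
    linarith
  · have := key1 a b
    have := SS_pos b hb
    linarith

lemma lemC' {m n : ℕ} (h : m = n + 1) (a : Fin m → ℝ) (b : Fin n → ℝ)
    (hab : ¬(a = 0 ∧ b = 0)) :
    MM a + MM b < 2 * XX a b + 2 * SS a := by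
  subst h
  by_cases ha : a = 0
  · subst ha
    have hb : b ≠ 0 := by tauto
    have hSb := SS_pos b hb
    have hK := keyB b
    rw [Fintype.card_fin] at hK
    rw [MM_zero, SS_zero, XX_zero_left b, Fintype.card_fin]
    push_cast
    linarith
  · have := key2 a b
    have := SS_pos a ha
    linarith

lemma SS_block {m n k : ℕ} (a : Fin m → ℝ) (b : Fin n → ℝ) :
    SS (Sum.elim (Sum.elim a b) (fun _ : Fin k => (0:ℝ))) = SS a + SS b := by
  simp [SS, Fintype.sum_sum_type]

lemma MM_block {m n k : ℕ} (a : Fin m → ℝ) (b : Fin n → ℝ) :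
    MM (Sum.elim (Sum.elim a b) (fun _ : Fin k => (0:ℝ)))
      = MM a + MM b + 2 * XX a b + 2 * k * (SS a + SS b) := by
  have hmax0 : ∀ x : ℝ, max |x| |(0:ℝ)| = |x| := fun x => by
    simp [max_eq_left (abs_nonneg x)]
  have hmax0' : ∀ x : ℝ, max |(0:ℝ)| |x| = |x| := fun x => by
    simp [max_eq_right (abs_nonneg x)]
  have m1 : ∀ x : ℝ, max (0:ℝ) |x| = |x| := fun x => max_eq_right (abs_nonneg x)
  have m2 : ∀ x : ℝ, max |x| (0:ℝ) = |x| := fun x => max_eq_left (abs_nonneg x)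
  simp only [MM, Fintype.sum_sum_type, Sum.elim_inl, Sum.elim_inr, hmax0, hmax0', abs_zero,
    m1, m2, max_self, Finset.sum_const, Finset.card_univ, Fintype.card_fin, nsmul_eq_mul,
    Finset.sum_add_distrib, Finset.mul_sum, ← Finset.mul_sum]
  rw [show (∑ x : Fin n, ∑ y : Fin m, max |b x| |a y|)
      = ∑ x : Fin m, ∑ y : Fin n, max |a x| |b y| from XX_swap a b]
  show _ = _ + _ + 2 * (∑ i, ∑ j, max |a i| |b j|) + 2 * (k:ℝ) * ((∑ i, |a i|) + ∑ i, |b i|)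
  ring

lemma spike_sum {m : ℕ} (h : 1 ≤ m) :
    (∑ i : Fin m, (if (i:ℕ) = 0 then (1:ℝ) else 0)) = 1 := by
  have hiff : ∀ i : Fin m, ((i:ℕ) = 0 ↔ i = ⟨0, h⟩) := fun i =>
    ⟨fun h' => Fin.ext h', fun h' => by rw [h']⟩
  simp_rw [hiff]
  rw [Finset.sum_ite_eq' Finset.univ (⟨0, h⟩ : Fin m) (fun _ => (1:ℝ))]
  simp

lemma SS_spike {m : ℕ} (h : 1 ≤ m) :
    SS (fun i : Fin m => if (i:ℕ) = 0 then (1:ℝ) else 0) = 1 := by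
  unfold SS
  have habs : ∀ i : Fin m, |(if (i:ℕ) = 0 then (1:ℝ) else 0)| = if (i:ℕ) = 0 then (1:ℝ) else 0 :=
    fun i => by split_ifs <;> simp
  simp_rw [habs]
  exact spike_sum h

lemma MM_spike {m : ℕ} (h : 1 ≤ m) :
    MM (fun i : Fin m => if (i:ℕ) = 0 then (1:ℝ) else 0) = 2 * m - 1 := by
  set s : Fin m → ℝ := fun i : Fin m => if (i:ℕ) = 0 then (1:ℝ) else 0 with hs
  have pointwise : ∀ i j : Fin m, max |s i| |s j| = s i + s j - s i * s j := by
    intro i j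
    by_cases hi : (i:ℕ) = 0 <;> by_cases hj : (j:ℕ) = 0 <;> simp [hs, hi, hj] <;> norm_num
  have hsum : ∑ i, s i = 1 := spike_sum h
  unfold MM
  rw [Finset.sum_congr rfl fun i _ => Finset.sum_congr rfl fun j _ => pointwise i j]
  have inner : ∀ i : Fin m, ∑ j, (s i + s j - s i * s j) = m * s i + 1 - s i := by
    intro i
    rw [Finset.sum_sub_distrib, Finset.sum_add_distrib, ← Finset.mul_sum, hsum]
    simp only [Finset.sum_const, Finset.card_univ, Fintype.card_fin, nsmul_eq_mul]
    ring
  rw [Finset.sum_congr rfl fun i _ => inner i]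
  rw [Finset.sum_sub_distrib, Finset.sum_add_distrib, ← Finset.mul_sum, hsum]
  simp only [Finset.sum_const, Finset.card_univ, Fintype.card_fin, nsmul_eq_mul]
  ring

lemma spike_ne_zero {m : ℕ} (h : 1 ≤ m) :
    (fun i : Fin m => if (i:ℕ) = 0 then (1:ℝ) else 0) ≠ 0 := by
  intro hc
  have := congrFun hc ⟨0, h⟩
  simp at this

/-- Benoist–Kobayashi inequalities for `𝔥 = 𝔰𝔬_p ⊕ 𝔰𝔬_q ⊂ 𝔤 = 𝔰𝔬_{p+q}`. -/
theorem stmt1 (p q : ℕ) (hq : 1 ≤ q) (hpq : q ≤ p) :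
    ((∀ (a : Fin (p / 2) → ℝ) (b : Fin (q / 2) → ℝ),
        2 * (rhoSO p a + rhoSO q b) ≤
          rhoSO (p + q) (Sum.elim (Sum.elim a b)
            (fun _ : Fin ((p + q) / 2 - (p / 2 + q / 2)) => (0 : ℝ)))) ↔ p ≤ q + 2) ∧
    ((∀ (a : Fin (p / 2) → ℝ) (b : Fin (q / 2) → ℝ), ¬(a = 0 ∧ b = 0) →
        2 * (rhoSO p a + rhoSO q b) <
          rhoSO (p + q) (Sum.elim (Sum.elim a b)
            (fun _ : Fin ((p + q) / 2 - (p / 2 + q / 2)) => (0 : ℝ)))) ↔ p ≤ q + 1) := by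
  have spike_eval : 1 ≤ p / 2 →
      (2 * (rhoSO p (fun i : Fin (p/2) => if (i:ℕ) = 0 then (1:ℝ) else 0)
          + rhoSO q (0 : Fin (q/2) → ℝ)) = 2 * (p:ℝ) - 4) ∧
      (rhoSO (p + q) (Sum.elim (Sum.elim
          (fun i : Fin (p/2) => if (i:ℕ) = 0 then (1:ℝ) else 0) (0 : Fin (q/2) → ℝ))
          (fun _ : Fin ((p + q) / 2 - (p / 2 + q / 2)) => (0 : ℝ))) = (p:ℝ) + q - 2) := by
    intro h1
    rw [rhoSO_eq, rhoSO_eq, rhoSO_eq, MM_block, SS_block, MM_spike h1, SS_spike h1,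
      MM_zero, SS_zero, XX_zero_right, Fintype.card_fin, SS_spike h1]
    rcases Nat.even_or_odd p with hp | hp <;> rcases Nat.even_or_odd q with hq2 | hq2
    · have hpqe : Even (p + q) := hp.add hq2
      rw [if_pos hp, if_pos hq2, if_pos hpqe]
      obtain ⟨s, hs⟩ := id hp; obtain ⟨t, ht⟩ := id hq2
      have hk : (p+q)/2 - (p/2 + q/2) = 0 := by omega
      have hd1 : p/2 = s := by omega
      have hd2 : q/2 = t := by omega
      rw [hk, hd1, hd2]
      subst hs; subst ht
      push_cast
      constructor <;> ring
    · have hpqo : Odd (p + q) := hp.add_odd hq2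
      rw [if_pos hp, if_neg (Nat.not_even_iff_odd.mpr hq2),
        if_neg (Nat.not_even_iff_odd.mpr hpqo)]
      obtain ⟨s, hs⟩ := id hp; obtain ⟨t, ht⟩ := id hq2
      have hk : (p+q)/2 - (p/2 + q/2) = 0 := by omega
      have hd1 : p/2 = s := by omega
      have hd2 : q/2 = t := by omega
      rw [hk, hd1, hd2]
      subst hs; subst ht
      push_cast
      constructor <;> ring
    · have hpqo : Odd (p + q) := hp.add_even hq2
      rw [if_neg (Nat.not_even_iff_odd.mpr hp), if_pos hq2,
        if_neg (Nat.not_even_iff_odd.mpr hpqo)]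
      obtain ⟨s, hs⟩ := id hp; obtain ⟨t, ht⟩ := id hq2
      have hk : (p+q)/2 - (p/2 + q/2) = 0 := by omega
      have hd1 : p/2 = s := by omega
      have hd2 : q/2 = t := by omega
      rw [hk, hd1, hd2]
      subst hs; subst ht
      push_cast
      constructor <;> ring
    · have hpqe : Even (p + q) := hp.add_odd hq2
      rw [if_neg (Nat.not_even_iff_odd.mpr hp), if_neg (Nat.not_even_iff_odd.mpr hq2),
        if_pos hpqe]
      obtain ⟨s, hs⟩ := id hp; obtain ⟨t, ht⟩ := id hq2
      have hk : (p+q)/2 - (p/2 + q/2) = 1 := by omega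
      have hd1 : p/2 = s := by omega
      have hd2 : q/2 = t := by omega
      rw [hk, hd1, hd2]
      subst hs; subst ht
      push_cast
      constructor <;> ring
  have reduce : ∀ (a : Fin (p/2) → ℝ) (b : Fin (q/2) → ℝ),
      rhoSO (p + q) (Sum.elim (Sum.elim a b)
          (fun _ : Fin ((p + q) / 2 - (p / 2 + q / 2)) => (0 : ℝ)))
        - 2 * (rhoSO p a + rhoSO q b)
      = 2 * XX a b + 2 * (((p+q)/2 - (p/2 + q/2) : ℕ) : ℝ) * (SS a + SS b)
          - (if Even (p+q) then SS a + SS b else 0)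
          - (MM a + MM b) + 2 * (if Even p then SS a else 0)
          + 2 * (if Even q then SS b else 0) := by
    intro a b
    rw [rhoSO_eq, rhoSO_eq, rhoSO_eq, MM_block, SS_block]
    ring
  constructor
  · constructor
    · intro h
      by_contra hc
      push_neg at hc
      have h1 : 1 ≤ p / 2 := by omega
      obtain ⟨e1, e2⟩ := spike_eval h1
      have hle := h (fun i : Fin (p/2) => if (i:ℕ) = 0 then (1:ℝ) else 0) (0 : Fin (q/2) → ℝ)
      rw [e1, e2] at hle
      have h2 : (p:ℝ) ≤ (q:ℝ) + 2 := by linarith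
      have h3 : p ≤ q + 2 := by exact_mod_cast h2
      omega
    · intro hle a b
      have hr := reduce a b
      rcases Nat.even_or_odd p with hp | hp <;> rcases Nat.even_or_odd q with hq2 | hq2
      · have hpqe : Even (p + q) := hp.add hq2
        rw [if_pos hp, if_pos hq2, if_pos hpqe] at hr
        obtain ⟨s, hs⟩ := id hp; obtain ⟨t, ht⟩ := id hq2
        have hk : ((((p+q)/2 - (p/2 + q/2) : ℕ)) : ℝ) = 0 := by
          have : (p+q)/2 - (p/2 + q/2) = 0 := by omega
          rw [this]; norm_num
        rw [hk] at hr
        have hmn : p/2 = q/2 ∨ p/2 = q/2 + 1 := by omega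
        have hA := lemA hmn a b
        push_cast at hr
        linarith
      · have hpqo : Odd (p + q) := hp.add_odd hq2
        rw [if_pos hp, if_neg (Nat.not_even_iff_odd.mpr hq2),
          if_neg (Nat.not_even_iff_odd.mpr hpqo)] at hr
        obtain ⟨s, hs⟩ := id hp; obtain ⟨t, ht⟩ := id hq2
        have hk : ((((p+q)/2 - (p/2 + q/2) : ℕ)) : ℝ) = 0 := by
          have : (p+q)/2 - (p/2 + q/2) = 0 := by omega
          rw [this]; norm_num
        rw [hk] at hr
        have hmn : p/2 = q/2 + 1 := by omega
        have hA := lemC hmn a b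
        push_cast at hr
        linarith
      · have hpqo : Odd (p + q) := hp.add_even hq2
        rw [if_neg (Nat.not_even_iff_odd.mpr hp), if_pos hq2,
          if_neg (Nat.not_even_iff_odd.mpr hpqo)] at hr
        obtain ⟨s, hs⟩ := id hp; obtain ⟨t, ht⟩ := id hq2
        have hk : ((((p+q)/2 - (p/2 + q/2) : ℕ)) : ℝ) = 0 := by
          have : (p+q)/2 - (p/2 + q/2) = 0 := by omega
          rw [this]; norm_num
        rw [hk] at hr
        have hmn : p/2 = q/2 := by omega
        have hA := lemB hmn a b
        push_cast at hr
        linarith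
      · have hpqe : Even (p + q) := hp.add_odd hq2
        rw [if_neg (Nat.not_even_iff_odd.mpr hp), if_neg (Nat.not_even_iff_odd.mpr hq2),
          if_pos hpqe] at hr
        obtain ⟨s, hs⟩ := id hp; obtain ⟨t, ht⟩ := id hq2
        have hk : ((((p+q)/2 - (p/2 + q/2) : ℕ)) : ℝ) = 1 := by
          have : (p+q)/2 - (p/2 + q/2) = 1 := by omega
          rw [this]; norm_num
        rw [hk] at hr
        have hmn : p/2 = q/2 ∨ p/2 = q/2 + 1 := by omega
        have hA := lemA hmn a b
        push_cast at hr
        linarith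
  · constructor
    · intro h
      by_contra hc
      push_neg at hc
      have h1 : 1 ≤ p / 2 := by omega
      obtain ⟨e1, e2⟩ := spike_eval h1
      have hne : ¬((fun i : Fin (p/2) => if (i:ℕ) = 0 then (1:ℝ) else 0) = 0
          ∧ (0 : Fin (q/2) → ℝ) = 0) := by
        intro hcc
        exact spike_ne_zero h1 hcc.1
      have hlt := h (fun i : Fin (p/2) => if (i:ℕ) = 0 then (1:ℝ) else 0)
        (0 : Fin (q/2) → ℝ) hne
      rw [e1, e2] at hlt
      have h2 : (p:ℝ) < (q:ℝ) + 2 := by linarith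
      have h3 : p < q + 2 := by exact_mod_cast h2
      omega
    · intro hle a b hab
      have hr := reduce a b
      rcases Nat.even_or_odd p with hp | hp <;> rcases Nat.even_or_odd q with hq2 | hq2
      · have hpqe : Even (p + q) := hp.add hq2
        rw [if_pos hp, if_pos hq2, if_pos hpqe] at hr
        obtain ⟨s, hs⟩ := id hp; obtain ⟨t, ht⟩ := id hq2
        have hk : ((((p+q)/2 - (p/2 + q/2) : ℕ)) : ℝ) = 0 := by
          have : (p+q)/2 - (p/2 + q/2) = 0 := by omega
          rw [this]; norm_num
        rw [hk] at hr
        have hmn : p/2 = q/2 := by omega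
        have hA := lemA' hmn a b hab
        push_cast at hr
        linarith
      · have hpqo : Odd (p + q) := hp.add_odd hq2
        rw [if_pos hp, if_neg (Nat.not_even_iff_odd.mpr hq2),
          if_neg (Nat.not_even_iff_odd.mpr hpqo)] at hr
        obtain ⟨s, hs⟩ := id hp; obtain ⟨t, ht⟩ := id hq2
        have hk : ((((p+q)/2 - (p/2 + q/2) : ℕ)) : ℝ) = 0 := by
          have : (p+q)/2 - (p/2 + q/2) = 0 := by omega
          rw [this]; norm_num
        rw [hk] at hr
        have hmn : p/2 = q/2 + 1 := by omega
        have hA := lemC' hmn a b hab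
        push_cast at hr
        linarith
      · have hpqo : Odd (p + q) := hp.add_even hq2
        rw [if_neg (Nat.not_even_iff_odd.mpr hp), if_pos hq2,
          if_neg (Nat.not_even_iff_odd.mpr hpqo)] at hr
        obtain ⟨s, hs⟩ := id hp; obtain ⟨t, ht⟩ := id hq2
        have hk : ((((p+q)/2 - (p/2 + q/2) : ℕ)) : ℝ) = 0 := by
          have : (p+q)/2 - (p/2 + q/2) = 0 := by omega
          rw [this]; norm_num
        rw [hk] at hr
        have hmn : p/2 = q/2 := by omega
        have hA := lemB' hmn a b hab
        push_cast at hr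
        linarith
      · have hpqe : Even (p + q) := hp.add_odd hq2
        rw [if_neg (Nat.not_even_iff_odd.mpr hp), if_neg (Nat.not_even_iff_odd.mpr hq2),
          if_pos hpqe] at hr
        obtain ⟨s, hs⟩ := id hp; obtain ⟨t, ht⟩ := id hq2
        have hk : ((((p+q)/2 - (p/2 + q/2) : ℕ)) : ℝ) = 1 := by
          have : (p+q)/2 - (p/2 + q/2) = 1 := by omega
          rw [this]; norm_num
        rw [hk] at hr
        have hmn : p/2 = q/2 := by omega
        have hA := lemA' hmn a b hab
        push_cast at hr
        linarith
end

section
/- For all integers p, q ≥ 1 there exist tuples a ∈ ℝ^p and b ∈ ℝ^q such that 2(ρ_C(a) + ρ_C(b)) > ρ_C(a ⌢ b), where a ⌢ b ∈ ℝ^{p+q} is the concatenation. (Thus for 𝔥 = 𝔰𝔭_p(ℂ) ⊕ 𝔰𝔭_q(ℂ) ⊂ 𝔤 = 𝔰𝔭_{p+q}(ℂ) the Benoist–Kobayashi inequality ρ_𝔥 ≤ ρ_{𝔤/𝔥} always fails.) -/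
open Finset

lemma rhoC_boolean {ι : Type*} [Fintype ι] (c : ι → ℝ) (h : ∀ i, c i = 0 ∨ c i = 1) :
    rhoC c = 2 * (Fintype.card ι) * (∑ i, c i) - (∑ i, c i) ^ 2 + (∑ i, c i) := by
  have habs : ∀ i, |c i| = c i := fun i => by rcases h i with h' | h' <;> simp [h']
  have hterm : ∀ i j, |c i - c j| + |c i + c j| = 2 * (c i + c j - c i * c j) := by
    intro i j
    rcases h i with h1 | h1 <;> rcases h j with h2 | h2 <;> simp [h1, h2] <;> norm_num
  unfold rhoC rhoB
  simp only [hterm, habs]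
  have : ∀ i, ∑ j, 2 * (c i + c j - c i * c j)
      = 2 * ((Fintype.card ι) * c i + (∑ j, c j) - c i * (∑ j, c j)) := by
    intro i
    rw [← Finset.mul_sum, Finset.sum_sub_distrib, Finset.sum_add_distrib, Finset.sum_const,
      ← Finset.mul_sum]
    simp [nsmul_eq_mul, Finset.card_univ]
  simp only [this]
  rw [← Finset.mul_sum, Finset.sum_sub_distrib, Finset.sum_add_distrib, Finset.sum_const,
    ← Finset.mul_sum, ← Finset.sum_mul]
  simp only [nsmul_eq_mul, Finset.card_univ]
  ring

/-- For `𝔥 = 𝔰𝔭_p ⊕ 𝔰𝔭_q ⊂ 𝔤 = 𝔰𝔭_{p+q}` the Benoist–Kobayashi inequality always fails. -/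
theorem stmt2 (p q : ℕ) (hp : 1 ≤ p) (hq : 1 ≤ q) :
    ∃ (a : Fin p → ℝ) (b : Fin q → ℝ),
      rhoC (Sum.elim a b) < 2 * (rhoC a + rhoC b) := by
  set i0 : Fin p := ⟨0, hp⟩
  set j0 : Fin q := ⟨0, hq⟩
  refine ⟨fun i => if i = i0 then 1 else 0, fun j => if j = j0 then 1 else 0, ?_⟩
  have ha : ∀ i : Fin p, (if i = i0 then (1:ℝ) else 0) = 0 ∨ (if i = i0 then (1:ℝ) else 0) = 1 := by
    intro i; split_ifs <;> simp
  have hb : ∀ j : Fin q, (if j = j0 then (1:ℝ) else 0) = 0 ∨ (if j = j0 then (1:ℝ) else 0) = 1 := by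
    intro j; split_ifs <;> simp
  have hab : ∀ x : Fin p ⊕ Fin q,
      Sum.elim (fun i => if i = i0 then (1:ℝ) else 0) (fun j => if j = j0 then 1 else 0) x = 0 ∨
      Sum.elim (fun i => if i = i0 then (1:ℝ) else 0) (fun j => if j = j0 then 1 else 0) x = 1 := by
    rintro (i | j)
    · exact ha i
    · exact hb j
  have sa : (∑ i : Fin p, if i = i0 then (1:ℝ) else 0) = 1 := by simp
  have sb : (∑ j : Fin q, if j = j0 then (1:ℝ) else 0) = 1 := by simp
  have sab : (∑ x : Fin p ⊕ Fin q,
      Sum.elim (fun i => if i = i0 then (1:ℝ) else 0) (fun j => if j = j0 then 1 else 0) x) = 2 := by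
    rw [Fintype.sum_sum_type]
    simp
    norm_num
  rw [rhoC_boolean _ ha, rhoC_boolean _ hb, rhoC_boolean _ hab, sa, sb, sab]
  simp only [Fintype.card_fin, Fintype.card_sum]
  push_cast
  nlinarith [hp, hq]
end

section
/- Let p ≥ 2 and p' = ⌊p/2⌋. For every nonzero a ∈ ℝ^{p'} one has 2ρ_{SO_p}(a) < ρ_A(ι(a)), where ι(a) ∈ ℝ^p is the tuple (a_1, −a_1, a_2, −a_2, …, a_{p'}, −a_{p'}), followed by one additional entry 0 if p is odd. (This is the strict Benoist–Kobayashi inequality ρ_𝔥 < ρ_{𝔤/𝔥} on 𝔞∖{0} for 𝔥 = 𝔰𝔬_p(ℂ) ⊂ 𝔤 = 𝔰𝔩_p(ℂ).) -/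
open Finset

private lemma rhoA_elim (m r : ℕ) (a : Fin m → ℝ) :
    rhoA (Sum.elim a (Sum.elim (fun i => -a i) (fun _ : Fin r => (0:ℝ)))) =
      2 * rhoB a + 2 * r * ∑ i, |a i| := by
  simp only [rhoA, rhoB, Fintype.sum_sum_type, Sum.elim_inl, Sum.elim_inr,
    sub_neg_eq_add, sub_zero, zero_sub, abs_neg, neg_sub_neg, sum_add_distrib,
    sum_const, card_univ, Fintype.card_fin, nsmul_eq_mul, zero_add, abs_zero,
    mul_zero, ← Finset.mul_sum]
  have h2 : ∑ i, ∑ j, |-a i - a j| = ∑ i, ∑ j, |a i + a j| := by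
    congr 1; ext i; congr 1; ext j
    rw [show -a i - a j = -(a i + a j) by ring, abs_neg]
  have h3 : ∑ i, ∑ j, |-a i + a j| = ∑ i, ∑ j, |a i - a j| := by
    rw [Finset.sum_comm]
    congr 1; ext i; congr 1; ext j
    rw [show -a j + a i = a i - a j by ring]
  rw [h2, h3]
  ring

/-- Strict Benoist–Kobayashi inequality for `𝔥 = 𝔰𝔬_p ⊂ 𝔤 = 𝔰𝔩_p`. -/
theorem stmt3 (p : ℕ) (hp : 2 ≤ p) (a : Fin (p / 2) → ℝ) (ha : a ≠ 0) :
    2 * rhoSO p a <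
      rhoA (Sum.elim a (Sum.elim (fun i => -a i)
        (fun _ : Fin (p - 2 * (p / 2)) => (0 : ℝ)))) :=  by
  have hA := rhoA_elim (p / 2) (p - 2 * (p / 2)) a
  rw [hA]
  obtain ⟨i, hi⟩ := Function.ne_iff.mp ha
  have hT : 0 < ∑ i, |a i| :=
    Finset.sum_pos' (fun j _ => abs_nonneg _)
      ⟨i, Finset.mem_univ i, abs_pos.mpr hi⟩
  rcases Nat.even_or_odd p with he | ho
  · have hr : p - 2 * (p / 2) = 0 := by obtain ⟨k, hk⟩ := he; omega
    rw [rhoSO, if_pos he, rhoD, hr]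
    push_cast
    linarith
  · have hr : p - 2 * (p / 2) = 1 := by
      obtain ⟨k, hk⟩ := ho; omega
    rw [rhoSO, if_neg (Nat.not_even_iff_odd.mpr ho), hr]
    push_cast
    linarith
end

section
/- For every integer p ≥ 1 there exists a nonzero a ∈ ℝ^p such that 2ρ_C(a) > ρ_A(a ⌢ (−a)), where a ⌢ (−a) ∈ ℝ^{2p} is the tuple (a_1, …, a_p, −a_1, …, −a_p). (Thus for 𝔥 = 𝔰𝔭_p(ℂ) ⊂ 𝔤 = 𝔰𝔩_{2p}(ℂ) the Benoist–Kobayashi inequality ρ_𝔥 ≤ ρ_{𝔤/𝔥} fails.) -/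
open Finset

/-- For `𝔥 = 𝔰𝔭_p ⊂ 𝔤 = 𝔰𝔩_{2p}` the Benoist–Kobayashi inequality fails. -/
theorem stmt4 (p : ℕ) (hp : 1 ≤ p) :
    ∃ a : Fin p → ℝ, a ≠ 0 ∧ rhoA (Sum.elim a (fun i => -a i)) < 2 * rhoC a := by
  refine ⟨fun _ => 1, ?_, ?_⟩
  · intro h
    have := congrFun h ⟨0, by omega⟩
    norm_num at this
  · have hA : rhoA (Sum.elim (fun _ : Fin p => (1:ℝ)) (fun _ : Fin p => -(1:ℝ))) = 2 * p ^ 2 := by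
      simp [rhoA, Fintype.sum_sum_type]
      rw [show |(1:ℝ) + 1| = 2 by norm_num, show |(-1:ℝ) - 1| = 2 by norm_num]; ring
    have hC : rhoC (fun _ : Fin p => (1:ℝ)) = p ^ 2 + p := by
      simp [rhoC, rhoB]
      rw [show |(1:ℝ) + 1| = 2 by norm_num]; ring
    rw [hA, hC]
    have : (1:ℝ) ≤ p := by exact_mod_cast hp
    nlinarith
end

section
/- For every integer p ≥ 2 there exists a nonzero a ∈ ℝ^p with Σ_i a_i = 0 such that 2ρ_A(a) > ρ_D(a). (Thus for 𝔥 = 𝔰𝔩_p(ℂ) ⊂ 𝔤 = 𝔰𝔬_{2p}(ℂ) the Benoist–Kobayashi inequality ρ_𝔥 ≤ ρ_{𝔤/𝔥} fails.) -/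
open Finset

/-- Split a sum over `Fin p` into the values at `0`, `1`, and a constant rest. -/
lemma sum_split {p : ℕ} (hp : 2 ≤ p) (f : Fin p → ℝ) (c : ℝ)
    (h : ∀ i : Fin p, i.val ≠ 0 → i.val ≠ 1 → f i = c) :
    ∑ i, f i = f ⟨0, by omega⟩ + f ⟨1, by omega⟩ + ((p : ℝ) - 2) * c := by
  have hne : (⟨0, by omega⟩ : Fin p) ≠ ⟨1, by omega⟩ := by
    simp [Fin.ext_iff]
  have key : ∑ i, (f i - c) = (f ⟨0, by omega⟩ - c) + (f ⟨1, by omega⟩ - c) := by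
    apply Fintype.sum_eq_add _ _ hne
    intro x hx
    rw [h x, sub_self]
    · intro h0; exact hx.1 (Fin.ext h0)
    · intro h1; exact hx.2 (Fin.ext h1)
  have hsub : ∑ i, (f i - c) = (∑ i, f i) - (p : ℝ) * c := by
    rw [Finset.sum_sub_distrib, Finset.sum_const, Finset.card_univ, Fintype.card_fin,
      nsmul_eq_mul]
  rw [hsub] at key
  linarith

/-- For `𝔥 = 𝔰𝔩_p ⊂ 𝔤 = 𝔰𝔬_{2p}` the Benoist–Kobayashi inequality fails. -/
theorem stmt5 (p : ℕ) (hp : 2 ≤ p) :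
    ∃ a : Fin p → ℝ, a ≠ 0 ∧ (∑ i, a i) = 0 ∧ rhoD a < 2 * rhoA a := by
  set a : Fin p → ℝ := fun i => if i.val = 0 then 1 else if i.val = 1 then -1 else 0 with ha
  refine ⟨a, ?_, ?_, ?_⟩
  · intro h
    have := congrFun h ⟨0, by omega⟩
    simp [ha] at this
  · rw [sum_split hp a 0 (by intro i h0 h1; simp [ha, h0, h1])]
    simp [ha]
  · have hA : ∑ i, ∑ j, |a i - a j| = 4 * (p : ℝ) - 4 := by
      rw [sum_split hp _ 2 ?_]
      · have h0 : ∑ j, |a ⟨0, by omega⟩ - a j| = (p : ℝ) := by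
          rw [sum_split hp _ 1 (by intro j hj0 hj1; simp [ha, hj0, hj1])]
          norm_num [ha]
        have h1 : ∑ j, |a ⟨1, by omega⟩ - a j| = (p : ℝ) := by
          rw [sum_split hp _ 1 (by intro j hj0 hj1; simp [ha, hj0, hj1])]
          norm_num [ha]
        rw [h0, h1]; ring
      · intro i hi0 hi1
        rw [sum_split hp _ 0 (by intro j hj0 hj1; simp [ha, hi0, hi1, hj0, hj1])]
        norm_num [ha, hi0, hi1]
    have hB : ∑ i, ∑ j, (|a i - a j| + |a i + a j|) = 8 * (p : ℝ) - 8 := by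
      rw [sum_split hp _ 4 ?_]
      · have h0 : ∑ j, (|a ⟨0, by omega⟩ - a j| + |a ⟨0, by omega⟩ + a j|)
            = 2 * (p : ℝ) := by
          rw [sum_split hp _ 2 (by intro j hj0 hj1; norm_num [ha, hj0, hj1])]
          norm_num [ha]; ring
        have h1 : ∑ j, (|a ⟨1, by omega⟩ - a j| + |a ⟨1, by omega⟩ + a j|)
            = 2 * (p : ℝ) := by
          rw [sum_split hp _ 2 (by intro j hj0 hj1; norm_num [ha, hj0, hj1])]
          norm_num [ha]; ring
        rw [h0, h1]; ring
      · intro i hi0 hi1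
        rw [sum_split hp _ 0 (by intro j hj0 hj1; simp [ha, hi0, hi1, hj0, hj1])]
        norm_num [ha, hi0, hi1]
    have habs : ∑ i, |a i| = 2 := by
      rw [sum_split hp _ 0 (by intro i h0 h1; simp [ha, h0, h1])]
      norm_num [ha]
    have hp' : (2 : ℝ) ≤ (p : ℝ) := by exact_mod_cast hp
    rw [rhoD, rhoB, rhoA, hA, hB, habs]
    linarith
end

section
/- For every integer p ≥ 1 and every nonzero a ∈ ℝ^p with Σ_i a_i = 0 one has 2ρ_A(a) < ρ_C(a). (This is the strict Benoist–Kobayashi inequality ρ_𝔥 < ρ_{𝔤/𝔥} on 𝔞∖{0} for 𝔥 = 𝔰𝔩_p(ℂ) ⊂ 𝔤 = 𝔰𝔭_p(ℂ).) -/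
open Finset

lemma pair_id (m u v : ℝ) (hm : 0 ≤ m) (hu : m ≤ |u|) (hv : m ≤ |v|) :
    |u + v| - |u - v| =
      (|(u - m * Real.sign u) + (v - m * Real.sign v)| -
        |(u - m * Real.sign u) - (v - m * Real.sign v)|) +
        2 * m * (Real.sign u * Real.sign v) := by
  rcases eq_or_lt_of_le hm with hm0 | hm0
  · simp [← hm0]
  · have hu0 : u ≠ 0 := by intro h; rw [h, abs_zero] at hu; linarith
    have hv0 : v ≠ 0 := by intro h; rw [h, abs_zero] at hv; linarith
    rcases lt_or_gt_of_ne hu0 with h | h <;> rcases lt_or_gt_of_ne hv0 with h' | h'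
    · rw [Real.sign_of_neg h, Real.sign_of_neg h']
      rw [abs_of_neg h] at hu
      rw [abs_of_neg h'] at hv
      rw [abs_of_nonpos (show u + v ≤ 0 by linarith),
          abs_of_nonpos (show u - m * (-1) + (v - m * (-1)) ≤ 0 by linarith),
          show u - m * (-1) - (v - m * (-1)) = u - v by ring]
      ring
    · rw [Real.sign_of_neg h, Real.sign_of_pos h']
      rw [abs_of_neg h] at hu
      rw [abs_of_pos h'] at hv
      rw [abs_of_nonpos (show u - v ≤ 0 by linarith),
          abs_of_nonpos (show u - m * (-1) - (v - m * 1) ≤ 0 by linarith),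
          show u - m * (-1) + (v - m * 1) = u + v by ring]
      ring
    · rw [Real.sign_of_pos h, Real.sign_of_neg h']
      rw [abs_of_pos h] at hu
      rw [abs_of_neg h'] at hv
      rw [abs_of_nonneg (show 0 ≤ u - v by linarith),
          abs_of_nonneg (show 0 ≤ u - m * 1 - (v - m * (-1)) by linarith),
          show u - m * 1 + (v - m * (-1)) = u + v by ring]
      ring
    · rw [Real.sign_of_pos h, Real.sign_of_pos h']
      rw [abs_of_pos h] at hu
      rw [abs_of_pos h'] at hv
      rw [abs_of_nonneg (show 0 ≤ u + v by linarith),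
          abs_of_nonneg (show 0 ≤ u - m * 1 + (v - m * 1) by linarith),
          show u - m * 1 - (v - m * 1) = u - v by ring]
      ring

lemma key_aux {ι : Type*} [DecidableEq ι] :
    ∀ n (s : Finset ι), s.card = n → ∀ x : ι → ℝ,
      0 ≤ ∑ i ∈ s, ∑ j ∈ s, (|x i + x j| - |x i - x j|) := by
  intro n
  induction n using Nat.strong_induction_on with
  | _ n ih =>
    intro s hcard x
    rcases s.eq_empty_or_nonempty with rfl | hs
    · simp
    · obtain ⟨k, hk, hmin⟩ := s.exists_min_image (fun i => |x i|) hs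
      set m := |x k| with hm
      set y : ι → ℝ := fun i => x i - m * Real.sign (x i) with hy
      have hyk : y k = 0 := by
        simp only [hy]
        rcases lt_trichotomy (x k) 0 with h | h | h
        · rw [hm, Real.sign_of_neg h, abs_of_neg h]; ring
        · simp [hm, h]
        · rw [hm, Real.sign_of_pos h, abs_of_pos h]; ring
      have hstep : ∑ i ∈ s, ∑ j ∈ s, (|x i + x j| - |x i - x j|) =
          (∑ i ∈ s, ∑ j ∈ s, (|y i + y j| - |y i - y j|)) +
          2 * m * ((∑ i ∈ s, Real.sign (x i)) * (∑ j ∈ s, Real.sign (x j))) := by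
        have h1 : ∑ i ∈ s, ∑ j ∈ s, (|x i + x j| - |x i - x j|) =
            ∑ i ∈ s, ∑ j ∈ s, ((|y i + y j| - |y i - y j|) +
              2 * m * (Real.sign (x i) * Real.sign (x j))) := by
          refine Finset.sum_congr rfl (fun i hi => Finset.sum_congr rfl (fun j hj => ?_))
          exact pair_id m (x i) (x j) (abs_nonneg _) (hmin i hi) (hmin j hj)
        rw [h1]
        rw [Finset.sum_mul_sum]
        rw [Finset.mul_sum]
        rw [← Finset.sum_add_distrib]
        refine Finset.sum_congr rfl (fun i hi => ?_)
        rw [Finset.mul_sum, ← Finset.sum_add_distrib]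
      have hz' : ∑ j ∈ s, (|y k + y j| - |y k - y j|) = 0 := by
        apply Finset.sum_eq_zero; intro j hj; rw [hyk]; simp
      have h3 : ∑ i ∈ s.erase k, ∑ j ∈ s.erase k, (|y i + y j| - |y i - y j|) =
          ∑ i ∈ s, ∑ j ∈ s, (|y i + y j| - |y i - y j|) := by
        rw [show (∑ i ∈ s.erase k, ∑ j ∈ s.erase k, (|y i + y j| - |y i - y j|)) =
            ∑ i ∈ s.erase k, ∑ j ∈ s, (|y i + y j| - |y i - y j|) from
          Finset.sum_congr rfl (fun i _ => Finset.sum_erase s (by rw [hyk]; simp))]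
        exact Finset.sum_erase s hz'
      have hlt : (s.erase k).card < n := by
        rw [Finset.card_erase_of_mem hk, hcard]
        have : 0 < n := by rw [← hcard]; exact Finset.card_pos.mpr hs
        omega
      have hIH := ih _ hlt (s.erase k) rfl y
      rw [h3] at hIH
      have hT : 0 ≤ 2 * m * ((∑ i ∈ s, Real.sign (x i)) * (∑ j ∈ s, Real.sign (x j))) := by
        have : 0 ≤ m := abs_nonneg _
        nlinarith [mul_self_nonneg (∑ i ∈ s, Real.sign (x i))]
      rw [hstep]
      linarith

/-- Strict Benoist–Kobayashi inequality for `𝔥 = 𝔰𝔩_p ⊂ 𝔤 = 𝔰𝔭_p`. -/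
theorem stmt6 (p : ℕ) (hp : 1 ≤ p) (a : Fin p → ℝ) (ha : a ≠ 0)
    (hsum : (∑ i, a i) = 0) :
    2 * rhoA a < rhoC a := by
  have hkey := key_aux (Finset.univ.card) (Finset.univ : Finset (Fin p)) rfl a
  have hpos : 0 < ∑ i, |a i| := by
    have hex : ∃ i, a i ≠ 0 := by
      by_contra h; push_neg at h; exact ha (funext h)
    obtain ⟨i, hi⟩ := hex
    exact Finset.sum_pos' (fun j _ => abs_nonneg _)
      ⟨i, Finset.mem_univ i, abs_pos.mpr hi⟩
  have hdiff : ∑ i, ∑ j, (|a i + a j| - |a i - a j|) =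
      (∑ i, ∑ j, |a i + a j|) - ∑ i, ∑ j, |a i - a j| := by
    simp [Finset.sum_sub_distrib]
  have hsplit : ∑ i, ∑ j, (|a i - a j| + |a i + a j|) =
      (∑ i, ∑ j, |a i - a j|) + ∑ i, ∑ j, |a i + a j| := by
    simp [Finset.sum_add_distrib]
  rw [hdiff] at hkey
  unfold rhoC rhoB rhoA
  rw [hsplit]
  linarith
end

section
/- Let p, q ≥ 2. For all a ∈ ℝ^p with Σ_i a_i = 0 and b ∈ ℝ^q with Σ_j b_j = 0, not both zero, one has 2(ρ_A(a) + ρ_A(b)) < ρ_A((a_i + b_j)_{1≤i≤p, 1≤j≤q}), where (a_i + b_j) denotes the tuple in ℝ^{pq} whose entries are all sums a_i + b_j. (This is the strict Benoist–Kobayashi inequality for the tensor embedding 𝔥 = 𝔰𝔩_p(ℂ) ⊕ 𝔰𝔩_q(ℂ) ⊂ 𝔤 = 𝔰𝔩_{pq}(ℂ).) -/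
open Finset

private lemma ptw (x d : ℝ) : |x| + |d| ≤ |x + d| + |x - d| := by
  have h1 : |x + d + (x - d)| ≤ |x + d| + |x - d| := abs_add_le _ _
  have h2 : |x + d + -(x - d)| ≤ |x + d| + |-(x - d)| := abs_add_le _ _
  rw [abs_neg] at h2
  have e1 : x + d + (x - d) = 2 * x := by ring
  have e2 : x + d + -(x - d) = 2 * d := by ring
  rw [e1, abs_mul] at h1
  rw [e2, abs_mul] at h2
  simp only [abs_two] at h1 h2
  linarith

private lemma inner_bound {m : ℕ} (c : Fin m → ℝ) (x : ℝ) :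
    ((m:ℝ)^2 + m) * |x| + ∑ j, ∑ l, |c j - c l|
      ≤ 2 * ∑ j, ∑ l, |x + (c j - c l)| := by
  have pair : ∑ j, ∑ l, |x + (c j - c l)| = ∑ j, ∑ l, |x - (c j - c l)| := by
    rw [Finset.sum_comm]
    refine Finset.sum_congr rfl fun j _ => Finset.sum_congr rfl fun l _ => ?_
    congr 1; ring
  have step : ∑ j, ∑ l, (|x| + |c j - c l| + if j = l then |x| else 0)
      ≤ ∑ j, ∑ l, (|x + (c j - c l)| + |x - (c j - c l)|) := by
    refine Finset.sum_le_sum fun j _ => Finset.sum_le_sum fun l _ => ?_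
    by_cases h : j = l
    · subst h; simp
    · simp only [h, if_false, add_zero]; exact ptw _ _
  have comp : ∑ j, ∑ l, (|x| + |c j - c l| + if j = l then |x| else 0)
      = ((m:ℝ)^2 + m) * |x| + ∑ j, ∑ l, |c j - c l| := by
    simp [Finset.sum_add_distrib, Finset.sum_ite_eq, Finset.sum_const, Finset.card_univ]
    ring
  have split : ∑ j, ∑ l, (|x + (c j - c l)| + |x - (c j - c l)|)
      = 2 * ∑ j, ∑ l, |x + (c j - c l)| := by
    simp only [Finset.sum_add_distrib, ← pair]; ring
  linarith [step, comp.ge, split.le]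

private lemma key {p q : ℕ} (a : Fin p → ℝ) (b : Fin q → ℝ) :
    ((q:ℝ)^2 + q) * (∑ i, ∑ k, |a i - a k|) + (p:ℝ)^2 * (∑ j, ∑ l, |b j - b l|)
      ≤ 2 * ∑ i, ∑ j, ∑ k, ∑ l, |a i + b j - (a k + b l)| := by
  have reorder : ∑ i, ∑ j, ∑ k, ∑ l, |a i + b j - (a k + b l)|
      = ∑ i, ∑ k, ∑ j, ∑ l, |(a i - a k) + (b j - b l)| := by
    refine Finset.sum_congr rfl fun i _ => ?_
    rw [Finset.sum_comm]
    exact Finset.sum_congr rfl fun k _ => Finset.sum_congr rfl fun j _ =>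
      Finset.sum_congr rfl fun l _ => by congr 1; ring
  rw [reorder]
  have lhs_eq : ((q:ℝ)^2 + q) * (∑ i, ∑ k, |a i - a k|) + (p:ℝ)^2 * (∑ j, ∑ l, |b j - b l|)
      = ∑ i : Fin p, ∑ k : Fin p,
          (((q:ℝ)^2 + q) * |a i - a k| + ∑ j, ∑ l, |b j - b l|) := by
    simp [Finset.sum_add_distrib, Finset.mul_sum, Finset.sum_const, Finset.card_univ]
    exact Finset.sum_congr rfl fun x _ => Finset.sum_congr rfl fun y _ => by ring
  rw [lhs_eq]
  calc ∑ i : Fin p, ∑ k : Fin p, (((q:ℝ)^2 + q) * |a i - a k| + ∑ j, ∑ l, |b j - b l|)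
      ≤ ∑ i : Fin p, ∑ k : Fin p, (2 * ∑ j, ∑ l, |(a i - a k) + (b j - b l)|) :=
        Finset.sum_le_sum fun i _ => Finset.sum_le_sum fun k _ => inner_bound b (a i - a k)
    _ = 2 * ∑ i, ∑ k, ∑ j, ∑ l, |(a i - a k) + (b j - b l)| := by
        rw [Finset.mul_sum]
        exact Finset.sum_congr rfl fun i _ => by rw [Finset.mul_sum]

private lemma S_pos {m : ℕ} (hm : 1 ≤ m) (c : Fin m → ℝ) (hs : ∑ j, c j = 0) (hc : c ≠ 0) :
    0 < ∑ j, ∑ l, |c j - c l| := by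
  have hex : ∃ j l, c j ≠ c l := by
    by_contra h
    push_neg at h
    apply hc
    funext j
    have j0 : Fin m := ⟨0, hm⟩
    have hsum : ∑ l, c l = (m : ℝ) * c j0 := by
      rw [Finset.sum_congr rfl fun l _ => h l j0]
      simp [Finset.sum_const, Finset.card_univ, mul_comm]
    have hm0 : (m : ℝ) ≠ 0 := by positivity
    have : c j0 = 0 := by
      rw [hs] at hsum
      rcases mul_eq_zero.mp hsum.symm with h' | h'
      · exact absurd h' hm0
      · exact h'
    rw [h j j0, this]; rfl
  obtain ⟨j, l, hjl⟩ := hex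
  have h1 : |c j - c l| ≤ ∑ l', |c j - c l'| :=
    Finset.single_le_sum (f := fun l' => |c j - c l'|) (fun _ _ => abs_nonneg _) (Finset.mem_univ l)
  have h2 : ∑ l', |c j - c l'| ≤ ∑ j', ∑ l', |c j' - c l'| :=
    Finset.single_le_sum (f := fun j' => ∑ l', |c j' - c l'|)
      (fun _ _ => Finset.sum_nonneg fun _ _ => abs_nonneg _) (Finset.mem_univ j)
  have h0 : 0 < |c j - c l| := abs_pos.mpr (sub_ne_zero.mpr hjl)
  linarith

/-- Strict Benoist–Kobayashi inequality for the tensor embedding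
`𝔥 = 𝔰𝔩_p ⊕ 𝔰𝔩_q ⊂ 𝔤 = 𝔰𝔩_{pq}`. -/
theorem stmt7 (p q : ℕ) (hp : 2 ≤ p) (hq : 2 ≤ q)
    (a : Fin p → ℝ) (b : Fin q → ℝ)
    (hsa : (∑ i, a i) = 0) (hsb : (∑ j, b j) = 0)
    (hne : ¬(a = 0 ∧ b = 0)) :
    2 * (rhoA a + rhoA b) < rhoA (fun ij : Fin p × Fin q => a ij.1 + b ij.2) := by
  set Sa := ∑ i, ∑ k, |a i - a k| with hSa
  set Sb := ∑ j, ∑ l, |b j - b l| with hSb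
  set T := ∑ i, ∑ j, ∑ k, ∑ l, |a i + b j - (a k + b l)| with hT
  have hra : rhoA a = Sa / 2 := rfl
  have hrb : rhoA b = Sb / 2 := rfl
  have hrt : rhoA (fun ij : Fin p × Fin q => a ij.1 + b ij.2) = T / 2 := by
    rw [rhoA, hT]
    congr 1
    rw [Fintype.sum_prod_type]
    refine Finset.sum_congr rfl fun i _ => Finset.sum_congr rfl fun j _ => ?_
    rw [Fintype.sum_prod_type]
  have k1 := key a b
  have k2 := key b a
  have swap : ∑ j, ∑ i, ∑ l, ∑ k, |b j + a i - (b l + a k)| = T := by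
    rw [hT, Finset.sum_comm]
    refine Finset.sum_congr rfl fun i _ => ?_
    refine Finset.sum_congr rfl fun j _ => ?_
    rw [Finset.sum_comm]
    exact Finset.sum_congr rfl fun k _ => Finset.sum_congr rfl fun l _ => by congr 1; ring
  rw [swap] at k2
  rw [← hSa, ← hSb, ← hT] at k1
  rw [← hSa, ← hSb] at k2
  have hSa0 : 0 ≤ Sa := Finset.sum_nonneg fun _ _ => Finset.sum_nonneg fun _ _ => abs_nonneg _
  have hSb0 : 0 ≤ Sb := Finset.sum_nonneg fun _ _ => Finset.sum_nonneg fun _ _ => abs_nonneg _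
  have hpos : 0 < Sa + Sb := by
    rcases not_and_or.mp hne with h | h
    · have := S_pos (le_trans one_le_two hp) a hsa h
      linarith
    · have := S_pos (le_trans one_le_two hq) b hsb h
      linarith
  have hpr : (2:ℝ) ≤ (p:ℝ) := by exact_mod_cast hp
  have hqr : (2:ℝ) ≤ (q:ℝ) := by exact_mod_cast hq
  have hq2 : (10:ℝ) ≤ ((q:ℝ)^2 + q) + (q:ℝ)^2 := by nlinarith
  have hp2 : (10:ℝ) ≤ ((p:ℝ)^2 + p) + (p:ℝ)^2 := by nlinarith
  -- 2*k1 + k2 : (2(q²+q)+q²)Sa + (2p²+p²+p)Sb ≤ 6T ; coefficients ≥ 10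
  have e1 : 10 * Sa ≤ (((q:ℝ)^2 + q) + (q:ℝ)^2) * Sa := mul_le_mul_of_nonneg_right hq2 hSa0
  have e2 : 10 * Sb ≤ ((p:ℝ)^2 + ((p:ℝ)^2 + p)) * Sb := by
    have : (10:ℝ) ≤ (p:ℝ)^2 + ((p:ℝ)^2 + p) := by nlinarith
    exact mul_le_mul_of_nonneg_right this hSb0
  rw [hra, hrb, hrt]
  nlinarith [k1, k2, e1, e2, hpos]
end

section
/- Let p ≥ q ≥ 2 and set p' = ⌊p/2⌋, q' = ⌊q/2⌋. For a ∈ ℝ^{p'} and b ∈ ℝ^{q'} let T(a,b) ∈ ℝ^{⌊pq/2⌋} be the tuple consisting of all sums a_i + b_j and all differences a_i − b_j (1 ≤ i ≤ p', 1 ≤ j ≤ q'), followed by all entries a_i (1 ≤ i ≤ p') if q is odd, and by all entries b_j (1 ≤ j ≤ q') if p is odd. Then for every (a,b) ≠ (0,0) one has 2(ρ_{SO_p}(a) + ρ_{SO_q}(b)) < ρ_{SO_{pq}}(T(a,b)). (This is the strict Benoist–Kobayashi inequality for the tensor embedding 𝔥 = 𝔰𝔬_p(ℂ) ⊕ 𝔰𝔬_q(ℂ)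 ⊂ 𝔤 = 𝔰𝔬_{pq}(ℂ).) -/
open Finset

lemma two_max (u v : ℝ) : |u - v| + |u + v| = 2 * max |u| |v| := by
  rcases abs_cases (u - v) with ⟨h1, h1'⟩ | ⟨h1, h1'⟩ <;>
  rcases abs_cases (u + v) with ⟨h2, h2'⟩ | ⟨h2, h2'⟩ <;>
  rcases abs_cases u with ⟨h3, h3'⟩ | ⟨h3, h3'⟩ <;>
  rcases abs_cases v with ⟨h4, h4'⟩ | ⟨h4, h4'⟩ <;>
  rcases max_cases |u| |v| with ⟨h5, h5'⟩ | ⟨h5, h5'⟩ <;>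
  linarith

lemma rhoB_eq {ι : Type*} [Fintype ι] (c : ι → ℝ) :
    rhoB c = ∑ i, ∑ j, max |c i| |c j| := by
  unfold rhoB
  simp_rw [two_max, ← Finset.mul_sum]
  ring

lemma four_max (x y x' y' : ℝ) :
    4 * max (max |x| |y|) (max |x'| |y'|) ≤
      max |x + y| |x' + y'| + max |x - y| |x' + y'| +
        (max |x + y| |x' - y'| + max |x - y| |x' - y'|) := by
  have h1 := two_max x y
  have h2 := two_max x' y'
  rcases le_total (max |x| |y|) (max |x'| |y'|) with h | h
  · rw [max_eq_right h]
    linarith [le_max_right |x + y| |x' + y'|, le_max_right |x - y| |x' + y'|,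
      le_max_right |x + y| |x' - y'|, le_max_right |x - y| |x' - y'|]
  · rw [max_eq_left h]
    linarith [le_max_left |x + y| |x' + y'|, le_max_left |x - y| |x' + y'|,
      le_max_left |x + y| |x' - y'|, le_max_left |x - y| |x' - y'|]

section
variable {γ δ : Type*} [Fintype γ] [Fintype δ]

lemma blocks_ge (a : γ → ℝ) (b : δ → ℝ) :
    4 * (∑ i, ∑ j, ∑ i', ∑ j', max (max |a i| |b j|) (max |a i'| |b j'|))
      ≤ (∑ i, ∑ j, ∑ i', ∑ j', max |a i + b j| |a i' + b j'|) +
        (∑ i, ∑ j, ∑ i', ∑ j', max |a i - b j| |a i' + b j'|) +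
        ((∑ i, ∑ j, ∑ i', ∑ j', max |a i + b j| |a i' - b j'|) +
         (∑ i, ∑ j, ∑ i', ∑ j', max |a i - b j| |a i' - b j'|)) := by
  rw [Finset.mul_sum]
  simp_rw [Finset.mul_sum]
  rw [← Finset.sum_add_distrib, ← Finset.sum_add_distrib, ← Finset.sum_add_distrib]
  simp_rw [← Finset.sum_add_distrib]
  apply Finset.sum_le_sum; intro i _
  apply Finset.sum_le_sum; intro j _
  apply Finset.sum_le_sum; intro i' _
  apply Finset.sum_le_sum; intro j' _
  exact four_max (a i) (b j) (a i') (b j')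

lemma sum2T (a : γ → ℝ) (b : δ → ℝ) :
    (∑ i, ∑ j, |a i + b j|) + (∑ i, ∑ j, |a i - b j|)
      = 2 * ∑ i, ∑ j, max |a i| |b j| := by
  rw [add_comm, ← Finset.sum_add_distrib]
  simp_rw [← Finset.sum_add_distrib, two_max, ← Finset.mul_sum]


lemma diag_le (α : γ → ℝ) (hα : ∀ i, 0 ≤ α i) :
    ∑ i, α i ≤ ∑ i, ∑ j, max (α i) (α j) := by
  apply Finset.sum_le_sum; intro i _
  have h := Finset.single_le_sum (f := fun j => max (α i) (α j))
    (fun j _ => le_trans (hα i) (le_max_left _ _)) (Finset.mem_univ i)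
  simpa [max_self] using h

lemma TgeP [Nonempty δ] (α : γ → ℝ) (β : δ → ℝ) (hα : ∀ i, 0 ≤ α i) (hβ : ∀ j, 0 ≤ β j) :
    ∑ i, α i ≤ ∑ i, ∑ j, max (α i) (β j) := by
  apply Finset.sum_le_sum; intro i _
  calc α i ≤ max (α i) (β (Classical.arbitrary δ)) := le_max_left _ _
    _ ≤ ∑ j, max (α i) (β j) := Finset.single_le_sum (f := fun j => max (α i) (β j))
        (fun j _ => le_trans (hα i) (le_max_left _ _)) (Finset.mem_univ _)

lemma TgeQ [Nonempty γ] (α : γ → ℝ) (β : δ → ℝ) (hα : ∀ i, 0 ≤ α i) (hβ : ∀ j, 0 ≤ β j) :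
    ∑ j, β j ≤ ∑ i, ∑ j, max (α i) (β j) := by
  have h0 : ∑ j, β j ≤ ∑ j, max (α (Classical.arbitrary γ)) (β j) :=
    Finset.sum_le_sum fun j _ => le_max_right _ _
  refine le_trans h0 (Finset.single_le_sum (f := fun i => ∑ j, max (α i) (β j))
    (fun i _ => Finset.sum_nonneg fun j _ => le_trans (hβ j) (le_max_right _ _))
    (Finset.mem_univ _))

lemma cross_ge_a [Nonempty γ] (a : γ → ℝ) (b : δ → ℝ) :
    2 * (∑ i, ∑ j, max |a i| |b j|)
      ≤ (∑ x, ∑ i, ∑ j, max |a x| |a i + b j|) +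
        (∑ x, ∑ i, ∑ j, max |a x| |a i - b j|) := by
  have hx : ∀ x : γ, 2 * (∑ i, ∑ j, max |a i| |b j|)
      ≤ (∑ i, ∑ j, max |a x| |a i + b j|) + (∑ i, ∑ j, max |a x| |a i - b j|) := by
    intro x
    rw [add_comm, ← Finset.sum_add_distrib, Finset.mul_sum]
    simp_rw [← Finset.sum_add_distrib, Finset.mul_sum]
    apply Finset.sum_le_sum; intro i _
    apply Finset.sum_le_sum; intro j _
    have h := two_max (a i) (b j)
    linarith [le_max_right |a x| |a i - b j|, le_max_right |a x| |a i + b j|]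
  rw [← Finset.sum_add_distrib]
  refine le_trans (hx (Classical.arbitrary γ)) (Finset.single_le_sum
    (f := fun x => (∑ i, ∑ j, max |a x| |a i + b j|) + (∑ i, ∑ j, max |a x| |a i - b j|))
    (fun x _ => by positivity) (Finset.mem_univ _))

lemma cross_ge_b [Nonempty δ] (a : γ → ℝ) (b : δ → ℝ) :
    2 * (∑ i, ∑ j, max |a i| |b j|)
      ≤ (∑ x, ∑ i, ∑ j, max |b x| |a i + b j|) +
        (∑ x, ∑ i, ∑ j, max |b x| |a i - b j|) := by
  have hx : ∀ x : δ, 2 * (∑ i, ∑ j, max |a i| |b j|)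
      ≤ (∑ i, ∑ j, max |b x| |a i + b j|) + (∑ i, ∑ j, max |b x| |a i - b j|) := by
    intro x
    rw [add_comm, ← Finset.sum_add_distrib, Finset.mul_sum]
    simp_rw [← Finset.sum_add_distrib, Finset.mul_sum]
    apply Finset.sum_le_sum; intro i _
    apply Finset.sum_le_sum; intro j _
    have h := two_max (a i) (b j)
    linarith [le_max_right |b x| |a i - b j|, le_max_right |b x| |a i + b j|]
  rw [← Finset.sum_add_distrib]
  refine le_trans (hx (Classical.arbitrary δ)) (Finset.single_le_sum
    (f := fun x => (∑ i, ∑ j, max |b x| |a i + b j|) + (∑ i, ∑ j, max |b x| |a i - b j|))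
    (fun x _ => by positivity) (Finset.mem_univ _))


lemma CB1 [Nonempty δ] (α : γ → ℝ) (β : δ → ℝ) (hα : ∀ i, 0 ≤ α i) :
    ((∑ i, ∑ i', max (α i) (α i')) - ∑ i, α i) + (∑ i, ∑ j, max (α i) (β j))
      ≤ ∑ i, ∑ j, ∑ i', ∑ j', max (max (α i) (β j)) (max (α i') (β j')) := by
  classical
  have hd : ∀ i, 0 ≤ (∑ i', max (α i) (α i')) - α i := by
    intro i
    have h := Finset.single_le_sum (f := fun i' => max (α i) (α i'))
      (fun i' _ => le_trans (hα i) (le_max_left _ _)) (Finset.mem_univ i)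
    simp only [max_self] at h
    linarith
  calc ((∑ i, ∑ i', max (α i) (α i')) - ∑ i, α i) + (∑ i, ∑ j, max (α i) (β j))
      = ∑ i, (((∑ i', max (α i) (α i')) - α i) + ∑ j, max (α i) (β j)) := by
        rw [Finset.sum_add_distrib, Finset.sum_sub_distrib]
    _ ≤ ∑ i, ∑ j, (((∑ i', max (α i) (α i')) - α i) + max (α i) (β j)) := by
        apply Finset.sum_le_sum; intro i _
        rw [Finset.sum_add_distrib, Finset.sum_const, Finset.card_univ, nsmul_eq_mul]
        have h1 : (1 : ℝ) ≤ (Fintype.card δ : ℝ) := by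
          exact_mod_cast Nat.one_le_iff_ne_zero.mpr (Fintype.card_ne_zero)
        nlinarith [hd i]
    _ = ∑ i, ∑ j, ∑ i', (max (α i) (α i') + if i' = i then max (α i) (β j) - α i else 0) := by
        apply Finset.sum_congr rfl; intro i _
        apply Finset.sum_congr rfl; intro j _
        rw [Finset.sum_add_distrib, Finset.sum_ite_eq' Finset.univ i
          (fun _ => max (α i) (β j) - α i)]
        simp only [Finset.mem_univ, if_true]
        ring
    _ ≤ ∑ i, ∑ j, ∑ i', max (max (α i) (β j)) (max (α i') (β j)) := by
        apply Finset.sum_le_sum; intro i _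
        apply Finset.sum_le_sum; intro j _
        apply Finset.sum_le_sum; intro i' _
        by_cases h : i' = i
        · subst h
          simp only [eq_self_iff_true, if_true, max_self]
          linarith
        · simp only [h, if_false, add_zero]
          exact max_le_max (le_max_left _ _) (le_max_left _ _)
    _ ≤ ∑ i, ∑ j, ∑ i', ∑ j', max (max (α i) (β j)) (max (α i') (β j')) := by
        apply Finset.sum_le_sum; intro i _
        apply Finset.sum_le_sum; intro j _
        apply Finset.sum_le_sum; intro i' _
        exact Finset.single_le_sum (f := fun j' => max (max (α i) (β j)) (max (α i') (β j')))
          (fun j' _ => le_trans (hα i) (le_trans (le_max_left _ _) (le_max_left _ _)))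
          (Finset.mem_univ j)

lemma CB2 [Nonempty γ] (α : γ → ℝ) (β : δ → ℝ) (hβ : ∀ j, 0 ≤ β j) :
    ((∑ j, ∑ j', max (β j) (β j')) - ∑ j, β j) + (∑ i, ∑ j, max (α i) (β j))
      ≤ ∑ i, ∑ j, ∑ i', ∑ j', max (max (α i) (β j)) (max (α i') (β j')) := by
  classical
  have hc : ∀ j, 0 ≤ (∑ j', max (β j) (β j')) - β j := by
    intro j
    have h := Finset.single_le_sum (f := fun j' => max (β j) (β j'))
      (fun j' _ => le_trans (hβ j) (le_max_left _ _)) (Finset.mem_univ j)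
    simp only [max_self] at h
    linarith
  have hD : 0 ≤ (∑ j, ∑ j', max (β j) (β j')) - ∑ j, β j := by
    rw [← Finset.sum_sub_distrib]
    exact Finset.sum_nonneg fun j _ => hc j
  calc ((∑ j, ∑ j', max (β j) (β j')) - ∑ j, β j) + (∑ i, ∑ j, max (α i) (β j))
      ≤ ∑ i, (((∑ j, ∑ j', max (β j) (β j')) - ∑ j, β j) + ∑ j, max (α i) (β j)) := by
        rw [Finset.sum_add_distrib, Finset.sum_const, Finset.card_univ, nsmul_eq_mul]
        have h1 : (1 : ℝ) ≤ (Fintype.card γ : ℝ) := by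
          exact_mod_cast Nat.one_le_iff_ne_zero.mpr (Fintype.card_ne_zero)
        nlinarith
    _ = ∑ i, ∑ j, (((∑ j', max (β j) (β j')) - β j) + max (α i) (β j)) := by
        apply Finset.sum_congr rfl; intro i _
        rw [Finset.sum_add_distrib, Finset.sum_sub_distrib]
    _ = ∑ i, ∑ j, ∑ j', (max (β j) (β j') + if j' = j then max (α i) (β j) - β j else 0) := by
        apply Finset.sum_congr rfl; intro i _
        apply Finset.sum_congr rfl; intro j _
        rw [Finset.sum_add_distrib, Finset.sum_ite_eq' Finset.univ j
          (fun _ => max (α i) (β j) - β j)]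
        simp only [Finset.mem_univ, if_true]
        ring
    _ ≤ ∑ i, ∑ j, ∑ j', max (max (α i) (β j)) (max (α i) (β j')) := by
        apply Finset.sum_le_sum; intro i _
        apply Finset.sum_le_sum; intro j _
        apply Finset.sum_le_sum; intro j' _
        by_cases h : j' = j
        · subst h
          simp only [eq_self_iff_true, if_true, max_self]
          linarith
        · simp only [h, if_false, add_zero]
          exact max_le_max (le_max_right _ _) (le_max_right _ _)
    _ ≤ ∑ i, ∑ j, ∑ i', ∑ j', max (max (α i) (β j)) (max (α i') (β j')) := by
        apply Finset.sum_le_sum; intro i _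
        apply Finset.sum_le_sum; intro j _
        exact Finset.single_le_sum
          (f := fun i' => ∑ j', max (max (α i) (β j)) (max (α i') (β j')))
          (fun i' _ => Finset.sum_nonneg fun j' _ =>
            le_trans (hβ j) (le_trans (le_max_right _ _) (le_max_left _ _)))
          (Finset.mem_univ i)

end

/-- Strict Benoist–Kobayashi inequality for the tensor embedding
`𝔥 = 𝔰𝔬_p ⊕ 𝔰𝔬_q ⊂ 𝔤 = 𝔰𝔬_{pq}`. -/
theorem stmt8 (p q : ℕ) (hq : 2 ≤ q) (hpq : q ≤ p)
    (a : Fin (p / 2) → ℝ) (b : Fin (q / 2) → ℝ) (hne : ¬(a = 0 ∧ b = 0)) :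
    2 * (rhoSO p a + rhoSO q b) <
      rhoSO (p * q)
        (Sum.elim (fun x : Fin (p / 2) × Fin (q / 2) => a x.1 + b x.2)
          (Sum.elim (fun x : Fin (p / 2) × Fin (q / 2) => a x.1 - b x.2)
            (Sum.elim (fun x : Fin (p / 2) × Fin (q % 2) => a x.1)
              (fun x : Fin (p % 2) × Fin (q / 2) => b x.2)))) := by
  have hp2 : 2 ≤ p := le_trans hq hpq
  have hp' : 0 < p / 2 := Nat.div_pos hp2 two_pos
  have hq' : 0 < q / 2 := Nat.div_pos hq two_pos
  haveI : Nonempty (Fin (p / 2)) := ⟨⟨0, hp'⟩⟩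
  haveI : Nonempty (Fin (q / 2)) := ⟨⟨0, hq'⟩⟩
  have hTnn : ∀ (i : Fin (p / 2)), 0 ≤ ∑ j : Fin (q / 2), max |a i| |b j| :=
    fun i => Finset.sum_nonneg fun j _ => le_trans (abs_nonneg _) (le_max_left _ _)
  have hTpos : 0 < ∑ i : Fin (p / 2), ∑ j : Fin (q / 2), max |a i| |b j| := by
    rcases not_and_or.mp hne with h | h
    · obtain ⟨i, hi⟩ := Function.ne_iff.mp h
      have h1 : (0:ℝ) < |a i| := abs_pos.mpr (by simpa using hi)
      calc (0:ℝ) < |a i| := h1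
        _ ≤ max |a i| |b ⟨0, hq'⟩| := le_max_left _ _
        _ ≤ ∑ j : Fin (q / 2), max |a i| |b j| :=
            Finset.single_le_sum (f := fun j => max |a i| |b j|)
              (fun j _ => le_trans (abs_nonneg _) (le_max_left _ _))
              (Finset.mem_univ (⟨0, hq'⟩ : Fin (q / 2)))
        _ ≤ ∑ i : Fin (p / 2), ∑ j : Fin (q / 2), max |a i| |b j| :=
            Finset.single_le_sum (f := fun i => ∑ j : Fin (q / 2), max |a i| |b j|)
              (fun i _ => hTnn i) (Finset.mem_univ i)
    · obtain ⟨j, hj⟩ := Function.ne_iff.mp h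
      have h1 : (0:ℝ) < |b j| := abs_pos.mpr (by simpa using hj)
      calc (0:ℝ) < |b j| := h1
        _ ≤ max |a ⟨0, hp'⟩| |b j| := le_max_right _ _
        _ ≤ ∑ j : Fin (q / 2), max |a ⟨0, hp'⟩| |b j| :=
            Finset.single_le_sum (f := fun j => max |a ⟨0, hp'⟩| |b j|)
              (fun j _ => le_trans (abs_nonneg _) (le_max_left _ _)) (Finset.mem_univ j)
        _ ≤ ∑ i : Fin (p / 2), ∑ j : Fin (q / 2), max |a i| |b j| :=
            Finset.single_le_sum (f := fun i => ∑ j : Fin (q / 2), max |a i| |b j|)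
              (fun i _ => hTnn i) (Finset.mem_univ (⟨0, hp'⟩ : Fin (p / 2)))
  have habs_a : ∀ i, (0:ℝ) ≤ |a i| := fun i => abs_nonneg _
  have habs_b : ∀ j, (0:ℝ) ≤ |b j| := fun j => abs_nonneg _
  have hMA : ∑ i, |a i| ≤ ∑ i, ∑ j, max |a i| |a j| := diag_le (fun i => |a i|) habs_a
  have hMB : ∑ j, |b j| ≤ ∑ i, ∑ j, max |b i| |b j| := diag_le (fun j => |b j|) habs_b
  have hTP : ∑ i, |a i| ≤ ∑ i, ∑ j, max |a i| |b j| :=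
    TgeP (fun i => |a i|) (fun j => |b j|) habs_a habs_b
  have hTQ : ∑ j, |b j| ≤ ∑ i, ∑ j, max |a i| |b j| :=
    TgeQ (fun i => |a i|) (fun j => |b j|) habs_a habs_b
  have hCa : 2 * (∑ i, ∑ j, max |a i| |b j|)
      ≤ (∑ x, ∑ i, ∑ j, max |a x| |a i + b j|) +
        (∑ x, ∑ i, ∑ j, max |a x| |a i - b j|) := cross_ge_a a b
  have hCb : 2 * (∑ i, ∑ j, max |a i| |b j|)
      ≤ (∑ x, ∑ i, ∑ j, max |b x| |a i + b j|) +
        (∑ x, ∑ i, ∑ j, max |b x| |a i - b j|) := cross_ge_b a b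
  have hB := blocks_ge a b
  have h1 : ((∑ i, ∑ i', max |a i| |a i'|) - ∑ i, |a i|)
      + (∑ i, ∑ j, max |a i| |b j|)
      ≤ ∑ i, ∑ j, ∑ i', ∑ j', max (max |a i| |b j|) (max |a i'| |b j'|) :=
    CB1 (fun i => |a i|) (fun j => |b j|) (fun i => abs_nonneg _)
  have h2 : ((∑ j, ∑ j', max |b j| |b j'|) - ∑ j, |b j|)
      + (∑ i, ∑ j, max |a i| |b j|)
      ≤ ∑ i, ∑ j, ∑ i', ∑ j', max (max |a i| |b j|) (max |a i'| |b j'|) :=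
    CB2 (fun i => |a i|) (fun j => |b j|) (fun j => abs_nonneg _)
  have hS := sum2T a b
  rcases Nat.even_or_odd p with hp | hp
  · rcases Nat.even_or_odd q with hq2 | hq2
    · have hpq2 : Even (p * q) := hp.mul_right q
      have hp0 : p % 2 = 0 := Nat.even_iff.mp hp
      have hq0 : q % 2 = 0 := Nat.even_iff.mp hq2
      rw [rhoSO, rhoSO, rhoSO, if_pos hp, if_pos hq2, if_pos hpq2]
      unfold rhoD
      rw [rhoB_eq, rhoB_eq, rhoB_eq]
      simp only [Fintype.sum_sum_type, Fintype.sum_prod_type, Sum.elim_inl, Sum.elim_inr,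
        Finset.sum_add_distrib, Finset.sum_const, Finset.card_univ, Fintype.card_fin,
        nsmul_eq_mul, hp0, hq0, Nat.cast_zero, zero_mul, mul_zero, add_zero, zero_add,
        Nat.cast_one, one_mul, Finset.sum_const_zero]
      linarith
    · have hpq2 : Even (p * q) := hp.mul_right q
      have hp0 : p % 2 = 0 := Nat.even_iff.mp hp
      have hq1 : q % 2 = 1 := Nat.odd_iff.mp hq2
      rw [rhoSO, rhoSO, rhoSO, if_pos hp, if_neg (Nat.not_even_iff_odd.mpr hq2), if_pos hpq2]
      unfold rhoD
      rw [rhoB_eq, rhoB_eq, rhoB_eq]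
      simp only [Fintype.sum_sum_type, Fintype.sum_prod_type, Sum.elim_inl, Sum.elim_inr,
        Finset.sum_add_distrib, Finset.sum_const, Finset.card_univ, Fintype.card_fin,
        nsmul_eq_mul, hp0, hq1, Nat.cast_zero, zero_mul, mul_zero, add_zero, zero_add,
        Nat.cast_one, one_mul, Finset.sum_const_zero]
      have hX3 : (0:ℝ) ≤ ∑ x : Fin (p / 2), ∑ x1 : Fin (q / 2), ∑ x2 : Fin (p / 2),
          max |a x + b x1| |a x2| :=
        Finset.sum_nonneg fun x _ => Finset.sum_nonneg fun x1 _ => Finset.sum_nonneg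
          fun x2 _ => le_trans (abs_nonneg _) (le_max_left _ _)
      have hX4 : (0:ℝ) ≤ ∑ x : Fin (p / 2), ∑ x1 : Fin (q / 2), ∑ x2 : Fin (p / 2),
          max |a x - b x1| |a x2| :=
        Finset.sum_nonneg fun x _ => Finset.sum_nonneg fun x1 _ => Finset.sum_nonneg
          fun x2 _ => le_trans (abs_nonneg _) (le_max_left _ _)
      linarith
  · have hp1 : p % 2 = 1 := Nat.odd_iff.mp hp
    rcases Nat.even_or_odd q with hq2 | hq2
    · have hpq2 : Even (p * q) := hq2.mul_left p
      have hq0 : q % 2 = 0 := Nat.even_iff.mp hq2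
      rw [rhoSO, rhoSO, rhoSO, if_neg (Nat.not_even_iff_odd.mpr hp), if_pos hq2, if_pos hpq2]
      unfold rhoD
      rw [rhoB_eq, rhoB_eq, rhoB_eq]
      simp only [Fintype.sum_sum_type, Fintype.sum_prod_type, Sum.elim_inl, Sum.elim_inr,
        Finset.sum_add_distrib, Finset.sum_const, Finset.card_univ, Fintype.card_fin,
        nsmul_eq_mul, hp1, hq0, Nat.cast_zero, zero_mul, mul_zero, add_zero, zero_add,
        Nat.cast_one, one_mul, Finset.sum_const_zero]
      have hX5 : (0:ℝ) ≤ ∑ x : Fin (p / 2), ∑ x1 : Fin (q / 2), ∑ x2 : Fin (q / 2),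
          max |a x + b x1| |b x2| :=
        Finset.sum_nonneg fun x _ => Finset.sum_nonneg fun x1 _ => Finset.sum_nonneg
          fun x2 _ => le_trans (abs_nonneg _) (le_max_left _ _)
      have hX6 : (0:ℝ) ≤ ∑ x : Fin (p / 2), ∑ x1 : Fin (q / 2), ∑ x2 : Fin (q / 2),
          max |a x - b x1| |b x2| :=
        Finset.sum_nonneg fun x _ => Finset.sum_nonneg fun x1 _ => Finset.sum_nonneg
          fun x2 _ => le_trans (abs_nonneg _) (le_max_left _ _)
      linarith
    · have hpq2 : Odd (p * q) := hp.mul hq2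
      have hp1' : p % 2 = 1 := hp1
      have hq1 : q % 2 = 1 := Nat.odd_iff.mp hq2
      rw [rhoSO, rhoSO, rhoSO, if_neg (Nat.not_even_iff_odd.mpr hp),
        if_neg (Nat.not_even_iff_odd.mpr hq2), if_neg (Nat.not_even_iff_odd.mpr hpq2)]
      rw [rhoB_eq, rhoB_eq, rhoB_eq]
      simp only [Fintype.sum_sum_type, Fintype.sum_prod_type, Sum.elim_inl, Sum.elim_inr,
        Finset.sum_add_distrib, Finset.sum_const, Finset.card_univ, Fintype.card_fin,
        nsmul_eq_mul, hp1, hq1, Nat.cast_zero, zero_mul, mul_zero, add_zero, zero_add,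
        Nat.cast_one, one_mul, Finset.sum_const_zero]
      have hX3 : (0:ℝ) ≤ ∑ x : Fin (p / 2), ∑ x1 : Fin (q / 2), ∑ x2 : Fin (p / 2),
          max |a x + b x1| |a x2| :=
        Finset.sum_nonneg fun x _ => Finset.sum_nonneg fun x1 _ => Finset.sum_nonneg
          fun x2 _ => le_trans (abs_nonneg _) (le_max_left _ _)
      have hX4 : (0:ℝ) ≤ ∑ x : Fin (p / 2), ∑ x1 : Fin (q / 2), ∑ x2 : Fin (p / 2),
          max |a x - b x1| |a x2| :=
        Finset.sum_nonneg fun x _ => Finset.sum_nonneg fun x1 _ => Finset.sum_nonneg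
          fun x2 _ => le_trans (abs_nonneg _) (le_max_left _ _)
      have hX5 : (0:ℝ) ≤ ∑ x : Fin (p / 2), ∑ x1 : Fin (q / 2), ∑ x2 : Fin (q / 2),
          max |a x + b x1| |b x2| :=
        Finset.sum_nonneg fun x _ => Finset.sum_nonneg fun x1 _ => Finset.sum_nonneg
          fun x2 _ => le_trans (abs_nonneg _) (le_max_left _ _)
      have hX6 : (0:ℝ) ≤ ∑ x : Fin (p / 2), ∑ x1 : Fin (q / 2), ∑ x2 : Fin (q / 2),
          max |a x - b x1| |b x2| :=
        Finset.sum_nonneg fun x _ => Finset.sum_nonneg fun x1 _ => Finset.sum_nonneg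
          fun x2 _ => le_trans (abs_nonneg _) (le_max_left _ _)
      have hX7 : (0:ℝ) ≤ ∑ x : Fin (q / 2), ∑ x1 : Fin (p / 2), max |b x| |a x1| :=
        Finset.sum_nonneg fun x _ => Finset.sum_nonneg
          fun x1 _ => le_trans (abs_nonneg _) (le_max_left _ _)
      linarith
end
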